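/- Let M be a finite-dimensional space of linear functionals on Π(ℝ^d) with a graded basis λ₁,…,λₙ (orders κᵢ), and let G ⊆ Π(ℝ^d) be any subspace correct for M (i.e., for every p ∈ Π there is a unique f ∈ G with μf = μp for all μ ∈ M). Then for every k, dim(G ∩ Π_{<k}) ≤ n − dim(M ∩ ⊥Π_{<k}). -/

import Mathlib

open MvPolynomial Finset

noncomputable section

/-- The multi-index on the first (`x`) block of variables of a monomial in `Fin d ⊕ Fin d`. -/
def xpart {d : ℕ} (m : (Fin d ⊕ Fin d) →₀ ℕ) : Fin d →₀ ℕ :=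
  Finsupp.equivFunOnFinite.symm fun i => m (Sum.inl i)

/-- The multi-index on the second (`y`) block of variables. -/
def ypart {d : ℕ} (m : (Fin d ⊕ Fin d) →₀ ℕ) : Fin d →₀ ℕ :=
  Finsupp.equivFunOnFinite.symm fun i => m (Sum.inr i)

/-- `(l ⊗ m) f`: apply `l` in the `x`-variables and `m` in the `y`-variables of a
two-block polynomial `f`, via its canonical representation as a sum of products
of monomials in `x` and monomials in `y`. -/
def tensorApply {d : ℕ} (l m : Module.Dual ℝ (MvPolynomial (Fin d) ℝ))
    (f : MvPolynomial (Fin d ⊕ Fin d) ℝ) : ℝ :=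
  ∑ mo ∈ f.support, f.coeff mo * l (monomial (xpart mo) 1) * m (monomial (ypart mo) 1)

/-- Apply the linear functional `l` in the second (`y`) block of variables,
yielding a polynomial in the first (`x`) block of variables. -/
def applySecond {d : ℕ} (l : Module.Dual ℝ (MvPolynomial (Fin d) ℝ))
    (f : MvPolynomial (Fin d ⊕ Fin d) ℝ) : MvPolynomial (Fin d) ℝ :=
  ∑ mo ∈ f.support, monomial (xpart mo) (f.coeff mo * l (monomial (ypart mo) 1))

/-- The polynomial `(x,y) ↦ ‖x-y‖^(2k)` in the `2d` variables `x(1),…,x(d),y(1),…,y(d)`. -/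
def distPoly (d k : ℕ) : MvPolynomial (Fin d ⊕ Fin d) ℝ :=
  (∑ i : Fin d, (X (Sum.inl i) - X (Sum.inr i)) ^ 2) ^ k

/-- `l` vanishes on all polynomials of total degree `< k` (i.e. `l ⊥ Π_{<k}`). -/
def VanishesLT {d : ℕ} (l : Module.Dual ℝ (MvPolynomial (Fin d) ℝ)) (k : ℕ) : Prop :=
  ∀ p : MvPolynomial (Fin d) ℝ, p.totalDegree < k → l p = 0

/-- `l` vanishes on all polynomials of total degree `≤ k` (i.e. `l ⊥ Π_{≤k}`). -/
def VanishesLE {d : ℕ} (l : Module.Dual ℝ (MvPolynomial (Fin d) ℝ)) (k : ℕ) : Prop :=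
  ∀ p : MvPolynomial (Fin d) ℝ, p.totalDegree ≤ k → l p = 0

/-- `p_{a,β} : x ↦ ‖x‖^(2a) x^β` as a polynomial. -/
def pPoly (d : ℕ) (a : ℕ) (β : Fin d →₀ ℕ) : MvPolynomial (Fin d) ℝ :=
  (∑ i : Fin d, X i ^ 2) ^ a * monomial β 1

/-- `⊥Π_{<k}`: the subspace of linear functionals vanishing on all polynomials
of total degree `< k`. -/
def perpLT (d k : ℕ) : Submodule ℝ (Module.Dual ℝ (MvPolynomial (Fin d) ℝ)) where
  carrier := {l | VanishesLT l k}
  zero_mem' := fun _ _ => rfl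
  add_mem' := fun {a b} ha hb p hp => by
    simp [LinearMap.add_apply, ha p hp, hb p hp]
  smul_mem' := fun c l hl p hp => by
    simp [LinearMap.smul_apply, hl p hp]

/-- `Π_{<k}`: the subspace of polynomials of total degree `< k`. -/
def degLT (d k : ℕ) : Submodule ℝ (MvPolynomial (Fin d) ℝ) where
  carrier := {p | ∀ m ∈ p.support, (m.sum fun _ e => e) < k}
  zero_mem' := by simp
  add_mem' := fun {a b} ha hb m hm => by
    rcases Finset.mem_union.mp (MvPolynomial.support_add hm) with h | h
    · exact ha m h
    · exact hb m h
  smul_mem' := fun c p hp m hm => hp m (MvPolynomial.support_smul hm)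

/-!
A polynomial `f ∈ G ∩ Π_{<k}` is killed by every `λᵢ` of order `κᵢ ≥ k`. If it is also killed
by the `λᵢ` with `κᵢ < k`, it is killed by all of `M`, hence `f = 0` by uniqueness of the
interpolant of `0`. So `f ↦ (λᵢ f)_{κᵢ < k}` is injective on `G ∩ Π_{<k}`, and
`#{i | κᵢ < k} = n - #{i | κᵢ ≥ k} = n - dim (M ∩ ⊥Π_{<k})`.
-/

section LinearAlgebra

variable {R K V ι : Type*}

theorem eq_zero_of_existsUnique_interpolant [CommSemiring R] [AddCommMonoid V] [Module R V]
    {M : Set (Module.Dual R V)} {G : Submodule R V}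
    (hG : ∀ p : V, ∃! f, f ∈ G ∧ ∀ μ ∈ M, μ f = μ p)
    {f : V} (hf : f ∈ G) (hfM : ∀ μ ∈ M, μ f = 0) : f = 0 := by
  obtain ⟨g, -, hg⟩ := hG 0
  exact (hg f ⟨hf, by simpa using hfM⟩).trans
    (hg 0 ⟨G.zero_mem, fun _ _ => rfl⟩).symm

theorem apply_eq_zero_of_mem_span_range [CommSemiring R] [AddCommMonoid V] [Module R V]
    {lam : ι → Module.Dual R V} {f : V} (hf : ∀ i, lam i f = 0)
    {μ : Module.Dual R V} (hμ : μ ∈ Submodule.span R (Set.range lam)) : μ f = 0 := by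
  have hle : Submodule.span R (Set.range lam) ≤ LinearMap.ker (Module.Dual.eval R V f) :=
    Submodule.span_le.mpr (Set.range_subset_iff.mpr hf)
  exact hle hμ

theorem finrank_le_card_of_forall_apply_eq_zero [Field K] [AddCommGroup V] [Module K V]
    [Fintype ι] (lam : ι → Module.Dual K V) (W : Submodule K V)
    (hW : ∀ w ∈ W, (∀ i, lam i w = 0) → w = 0) :
    Module.finrank K W ≤ Fintype.card ι := by
  let T : W →ₗ[K] ι → K := LinearMap.pi fun i => (lam i).comp W.subtype
  have hT : Function.Injective T := by
    rw [injective_iff_map_eq_zero]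
    exact fun w hw => Subtype.ext (hW w w.2 (congrFun hw))
  simpa using LinearMap.finrank_le_finrank_of_injective hT

end LinearAlgebra

theorem perpLT_zero (d : ℕ) : perpLT d 0 = ⊤ :=
  eq_top_iff.mpr fun _ _ _ hp => absurd hp (Nat.not_lt_zero _)

theorem apply_eq_zero_of_mem_perpLT_of_mem_degLT {d k : ℕ}
    {l : Module.Dual ℝ (MvPolynomial (Fin d) ℝ)} (hl : l ∈ perpLT d k)
    {p : MvPolynomial (Fin d) ℝ} (hp : p ∈ degLT d k) : l p = 0 := by
  rcases eq_or_ne p 0 with rfl | hp0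
  · exact map_zero l
  · obtain ⟨m, hm⟩ := MvPolynomial.support_nonempty.mpr hp0
    exact hl p ((Finset.sup_lt_iff (Nat.zero_lt_of_lt (hp m hm))).mpr hp)

theorem dim_correct_subspace_le_general (d n : ℕ)
    (M : Submodule ℝ (Module.Dual ℝ (MvPolynomial (Fin d) ℝ)))
    (lam : Fin n → Module.Dual ℝ (MvPolynomial (Fin d) ℝ))
    (κ : Fin n → ℕ)
    -- the basis is graded: `i ↦ κ i` is nondecreasing and, for each `k`,
    -- `(lam i : κ i ≥ k)` is a basis of `M ∩ ⊥Π_{<k}`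
    (hbasis : ∀ k : ℕ,
      LinearIndependent ℝ (fun i : {i : Fin n // k ≤ κ i} => lam i.1) ∧
      Submodule.span ℝ (Set.range fun i : {i : Fin n // k ≤ κ i} => lam i.1) =
        M ⊓ perpLT d k)
    (G : Submodule ℝ (MvPolynomial (Fin d) ℝ))
    (hG : ∀ p : MvPolynomial (Fin d) ℝ, ∃! f, f ∈ G ∧ ∀ μ ∈ M, μ f = μ p)
    : ∀ k : ℕ, Module.finrank ℝ ↥(G ⊓ degLT d k) ≤
        n - Module.finrank ℝ ↥(M ⊓ perpLT d k) := by
  intro k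
  have hspan : Submodule.span ℝ (Set.range lam) = M := by
    have hrange : Set.range (fun i : {i // 0 ≤ κ i} => lam i.1) = Set.range lam :=
      (Equiv.subtypeUnivEquiv fun i => Nat.zero_le (κ i)).surjective.range_comp lam
    rw [← hrange, (hbasis 0).2, perpLT_zero, inf_top_eq]
  have hhigh : ∀ i, k ≤ κ i → lam i ∈ perpLT d k := fun i hi =>
    ((hbasis k).2 ▸ Submodule.subset_span ⟨⟨i, hi⟩, rfl⟩ : lam i ∈ M ⊓ perpLT d k).2
  have hsep : ∀ f ∈ G ⊓ degLT d k, (∀ i : {i // κ i < k}, lam i f = 0) → f = 0 := by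
    intro f hf hlow
    have hall : ∀ i, lam i f = 0 := fun i =>
      if hi : κ i < k then hlow ⟨i, hi⟩
      else apply_eq_zero_of_mem_perpLT_of_mem_degLT (hhigh i (not_lt.mp hi)) hf.2
    exact eq_zero_of_existsUnique_interpolant (M := (M : Set _)) hG hf.1
      fun μ hμ => apply_eq_zero_of_mem_span_range hall (hspan ▸ hμ)
  calc Module.finrank ℝ ↥(G ⊓ degLT d k)
      ≤ Fintype.card {i // κ i < k} :=
        finrank_le_card_of_forall_apply_eq_zero (fun i => lam i.1) _ hsep
    _ = n - Fintype.card {i // k ≤ κ i} := by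
        simp_rw [← not_le, Fintype.card_subtype_compl, Fintype.card_fin]
    _ = n - Module.finrank ℝ ↥(M ⊓ perpLT d k) := by
        rw [← (hbasis k).2, finrank_span_eq_card (hbasis k).1]

/-- If `M` is an `n`-dimensional space of linear functionals with a graded basis (orders
`κᵢ`), and `G` is a polynomial subspace correct for `M` (every `p` has a unique match in
`G` at `M`), then for every `k`, `dim(G ∩ Π_{<k}) ≤ n − dim(M ∩ ⊥Π_{<k})`. -/
theorem dim_correct_subspace_le (d n : ℕ)
    (M : Submodule ℝ (Module.Dual ℝ (MvPolynomial (Fin d) ℝ)))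
    (hM : Module.finrank ℝ M = n)
    (lam : Fin n → Module.Dual ℝ (MvPolynomial (Fin d) ℝ))
    (hmem : ∀ i, lam i ∈ M)
    (κ : Fin n → ℕ)
    -- `κ i` is the order of `lam i`: the largest `k` with `lam i ⊥ Π_{<k}`
    (horder : ∀ i, VanishesLT (lam i) (κ i) ∧ ¬ VanishesLT (lam i) (κ i + 1))
    -- the basis is graded: `i ↦ κ i` is nondecreasing and, for each `k`,
    -- `(lam i : κ i ≥ k)` is a basis of `M ∩ ⊥Π_{<k}`
    (hmono : Monotone κ)
    (hbasis : ∀ k : ℕ,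
      LinearIndependent ℝ (fun i : {i : Fin n // k ≤ κ i} => lam i.1) ∧
      Submodule.span ℝ (Set.range fun i : {i : Fin n // k ≤ κ i} => lam i.1) =
        M ⊓ perpLT d k)
    (G : Submodule ℝ (MvPolynomial (Fin d) ℝ))
    (hG : ∀ p : MvPolynomial (Fin d) ℝ, ∃! f, f ∈ G ∧ ∀ μ ∈ M, μ f = μ p)
    : ∀ k : ℕ, Module.finrank ℝ ↥(G ⊓ degLT d k) ≤
        n - Module.finrank ℝ ↥(M ⊓ perpLT d k) :=
  dim_correct_subspace_le_general d n M lam κ hbasis G hG
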